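/- (Proposition 1) Let 0 < α < 1, let n ≥ 1 be a natural number, and let u, h : [x₁, x₂] → ℝ be continuous and strictly positive. Then the function ε ↦ ∫_{x₁}^{x₂} ∫_{−u(x)/h(x)}^{ε} u(x)^(n−nα)·h(x)^(nα)·(t + u(x)/h(x))^(nα)·(ε−t)^(−α) dt dx is differentiable at ε = 0, and (1/Γ(1−α)) times its derivative at ε = 0 equals (Γ(nα+1)/Γ((n−1)α+1)) · ∫_{x₁}^{x₂} u(x)^(n−α)·h(x)^α dx, which can be written as λ(α,n) · ∫_{x₁}^{x₂} (Γ(n+1)/Γ(n+1−α))·u(x)^(n−α)·h(x)^α dx with λ(α,n) = Γ(nα+1)·Γ(n+1−α) / (Γ((n−1)α+1)·Γ(n+1)). (This is the fractional Gateaux variation δ^α F[u] of the functional F[u] = ∫_{x₁}^{x₂} u(x)^n dx, since F[u^(1−α)·(u+εh)^α] = ∫_{x₁}^{x₂} u^(n−nα)·h^(nα)·(ε + u/h)^(nα) dx.) -/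

import Mathlib

/-!
After the substitution `t = -c + (s + c) y` with `c = u/h`, the inner integral is a Beta integral:
`∫_{-c}^{s} (t + c)^{nα} (s - t)^{-α} dt = B(nα + 1, 1 - α) (s + c)^{(n-1)α + 1}`, valid as long as
`s + c > 0`, which holds uniformly in `x` for `s` near `0` by compactness. Differentiating under
the outer integral and using `Γ(z + 1) = z Γ(z)` with `z = (n-1)α + 1` turns
`B(nα + 1, 1 - α) ((n-1)α + 1) / Γ(1 - α)` into `Γ(nα + 1) / Γ((n-1)α + 1)`, while
`u^{n - nα} h^{nα} (u/h)^{(n-1)α} = u^{n-α} h^α`.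
-/

open intervalIntegral Set Filter Topology ProbabilityTheory

theorem integral_rpow_mul_one_sub_rpow_eq_beta {p q : ℝ} (hp : 0 < p) (hq : 0 < q) :
    ∫ x in (0 : ℝ)..1, x ^ (p - 1) * (1 - x) ^ (q - 1) = beta p q := by
  have h : Complex.betaIntegral p q
      = ↑(∫ x in (0 : ℝ)..1, x ^ (p - 1) * (1 - x) ^ (q - 1)) := by
    rw [Complex.betaIntegral, ← intervalIntegral.integral_ofReal]
    refine integral_congr fun x hx => ?_
    rw [uIcc_of_le zero_le_one] at hx
    push_cast
    rw [Complex.ofReal_cpow hx.1, Complex.ofReal_cpow (sub_nonneg.2 hx.2)]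
    push_cast
    rfl
  rw [beta_eq_betaIntegralReal p q hp hq, h, Complex.ofReal_re]

theorem integral_sub_rpow_mul_sub_rpow_eq_beta {a b p q : ℝ} (hab : a < b) (hp : 0 < p)
    (hq : 0 < q) :
    ∫ t in a..b, (t - a) ^ (p - 1) * (b - t) ^ (q - 1) = beta p q * (b - a) ^ (p + q - 1) := by
  have hba : 0 < b - a := sub_pos.2 hab
  have hsub := integral_comp_mul_add
    (fun t => (t - a) ^ (p - 1) * (b - t) ^ (q - 1)) hba.ne' a (a := 0) (b := 1)
  simp only [mul_zero, zero_add, mul_one, sub_add_cancel, smul_eq_mul] at hsub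
  have hscale : ∀ x ∈ uIcc (0 : ℝ) 1,
      ((b - a) * x + a - a) ^ (p - 1) * (b - ((b - a) * x + a)) ^ (q - 1)
        = (b - a) ^ (p - 1 + (q - 1)) * (x ^ (p - 1) * (1 - x) ^ (q - 1)) := by
    intro x hx
    rw [uIcc_of_le zero_le_one] at hx
    rw [show b - ((b - a) * x + a) = (b - a) * (1 - x) by ring, add_sub_cancel_right,
      Real.mul_rpow hba.le hx.1, Real.mul_rpow hba.le (sub_nonneg.2 hx.2), Real.rpow_add hba]
    ring
  rw [integral_congr hscale, integral_const_mul, integral_rpow_mul_one_sub_rpow_eq_beta hp hq,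
    eq_inv_mul_iff_mul_eq₀ hba.ne'] at hsub
  rw [← hsub, show p + q - 1 = 1 + (p - 1 + (q - 1)) by ring, Real.rpow_add hba 1,
    Real.rpow_one]
  ring

theorem integral_mul_rpow_add_mul_sub_rpow (g : ℝ) {c s p q : ℝ} (hcs : 0 < s + c)
    (hp : -1 < p) (hq : -1 < q) :
    ∫ t in (-c)..s, g * (t + c) ^ p * (s - t) ^ q
      = beta (p + 1) (q + 1) * (g * (s + c) ^ (p + q + 1)) := by
  have hbeta := integral_sub_rpow_mul_sub_rpow_eq_beta (a := -c) (b := s) (p := p + 1)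
    (q := q + 1) (by linarith) (by linarith) (by linarith)
  simp_rw [sub_neg_eq_add, add_sub_cancel_right,
    show p + 1 + (q + 1) - 1 = p + q + 1 by ring] at hbeta
  rw [mul_left_comm, ← hbeta, ← integral_const_mul]
  exact integral_congr fun t _ => by ring

theorem eventually_forall_pos_add {X : Type*} [TopologicalSpace X] {K : Set X} (hK : IsCompact K)
    {c : X → ℝ} (hc : ContinuousOn c K) {s₀ : ℝ} (hpos : ∀ x ∈ K, 0 < s₀ + c x) :
    ∀ᶠ s in 𝓝 s₀, ∀ x ∈ K, 0 < s + c x := by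
  rcases K.eq_empty_or_nonempty with rfl | hne
  · simp
  obtain ⟨x₀, hx₀, hmin⟩ := hK.exists_isMinOn hne hc
  filter_upwards [Metric.ball_mem_nhds s₀ (hpos x₀ hx₀)] with s hs x hx
  rw [Metric.mem_ball, Real.dist_eq] at hs
  linarith [(abs_lt.1 hs).1, isMinOn_iff.1 hmin x hx]

theorem hasDerivAt_integral_mul_add_rpow {a b s₀ γ : ℝ} {g c : ℝ → ℝ}
    (hg : ContinuousOn g (uIcc a b)) (hc : ContinuousOn c (uIcc a b))
    (hpos : ∀ x ∈ uIcc a b, 0 < s₀ + c x) :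
    HasDerivAt (fun s => ∫ x in a..b, g x * (s + c x) ^ γ)
      (γ * ∫ x in a..b, g x * (s₀ + c x) ^ (γ - 1)) s₀ := by
  have hcont : ∀ s, (∀ x ∈ uIcc a b, 0 < s + c x) → ∀ r : ℝ,
      ContinuousOn (fun x => g x * (s + c x) ^ r) (uIcc a b) := fun s hs r =>
    have hadd : ContinuousOn (fun x => s + c x) (uIcc a b) := continuousOn_const.add hc
    hg.mul (hadd.rpow_const (p := r) fun x hx => Or.inl (hs x hx).ne')
  have hnear := eventually_forall_pos_add isCompact_uIcc hc hpos
  obtain ⟨ε, hε, hball⟩ := Metric.eventually_nhds_iff.1 hnear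
  have hS : ∀ s ∈ Metric.closedBall s₀ (ε / 2), ∀ x ∈ uIcc a b, 0 < s + c x := fun s hs =>
    hball (lt_of_le_of_lt (Metric.mem_closedBall.1 hs) (half_lt_self hε))
  -- The derivative is jointly continuous on a compact box around `s₀`, hence bounded there.
  have hbox := (isCompact_closedBall s₀ (ε / 2)).prod (isCompact_uIcc (a := a) (b := b))
  obtain ⟨C, hC⟩ := hbox.exists_bound_of_continuousOn
    (f := fun z : ℝ × ℝ => γ * (g z.2 * (z.1 + c z.2) ^ (γ - 1))) <| by
      refine continuousOn_const.mul ((hg.comp continuousOn_snd fun z hz => hz.2).mul ?_)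
      exact (continuousOn_fst.add (hc.comp continuousOn_snd fun z hz => hz.2)).rpow_const
        fun z hz => Or.inl (hS z.1 hz.1 z.2 hz.2).ne'
  rw [← integral_const_mul]
  refine (hasDerivAt_integral_of_dominated_loc_of_deriv_le
    (F := fun s x => g x * (s + c x) ^ γ) (F' := fun s x => γ * (g x * (s + c x) ^ (γ - 1)))
    (bound := fun _ => C) (Metric.closedBall_mem_nhds s₀ (half_pos hε)) ?_ ?_ ?_ ?_
    intervalIntegrable_const ?_).2
  · filter_upwards [hnear] with s hs
    exact ((hcont s hs γ).mono uIoc_subset_uIcc).aestronglyMeasurable measurableSet_uIoc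
  · exact (hcont s₀ hpos γ).intervalIntegrable
  · exact (((hcont s₀ hpos (γ - 1)).const_mul γ).mono uIoc_subset_uIcc).aestronglyMeasurable
      measurableSet_uIoc
  · exact .of_forall fun x hx s hs => hC (s, x) ⟨hs, uIoc_subset_uIcc hx⟩
  · refine .of_forall fun x hx s hs => ?_
    have hd := (((hasDerivAt_id s).add_const (c x)).rpow_const
      (p := γ) (Or.inl (hS s hs x (uIoc_subset_uIcc hx)).ne')).const_mul (g x)
    exact hd.congr_deriv (by simp only [id, one_mul]; ring)

theorem hasDerivAt_integral_integral_mul_rpow_add_mul_sub_rpow {a b p q : ℝ} {g c : ℝ → ℝ}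
    (hg : ContinuousOn g (uIcc a b)) (hc : ContinuousOn c (uIcc a b))
    (hcpos : ∀ x ∈ uIcc a b, 0 < c x) (hp : -1 < p) (hq : -1 < q) :
    HasDerivAt (fun s => ∫ x in a..b, ∫ t in (-c x)..s, g x * (t + c x) ^ p * (s - t) ^ q)
      ((p + q + 1) * beta (p + 1) (q + 1) * ∫ x in a..b, g x * c x ^ (p + q)) 0 := by
  have hpos : ∀ x ∈ uIcc a b, 0 < 0 + c x := by simpa using hcpos
  have hinner : (fun s => ∫ x in a..b, ∫ t in (-c x)..s, g x * (t + c x) ^ p * (s - t) ^ q)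
      =ᶠ[𝓝 0] fun s => beta (p + 1) (q + 1) * ∫ x in a..b, g x * (s + c x) ^ (p + q + 1) := by
    filter_upwards [eventually_forall_pos_add isCompact_uIcc hc hpos] with s hs
    rw [← integral_const_mul]
    exact integral_congr fun x hx => integral_mul_rpow_add_mul_sub_rpow _ (hs x hx) hp hq
  refine (((hasDerivAt_integral_mul_add_rpow hg hc hpos).const_mul _).congr_of_eventuallyEq
    hinner).congr_deriv ?_
  simp only [zero_add, add_sub_cancel_right]
  ring

theorem mul_beta_add_one_add_one {p q : ℝ} (hpq : p + q + 1 ≠ 0) :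
    (p + q + 1) * beta (p + 1) (q + 1)
      = Real.Gamma (p + 1) * Real.Gamma (q + 1) / Real.Gamma (p + q + 1) := by
  have hΓ : Real.Gamma (p + 1 + (q + 1)) = (p + q + 1) * Real.Gamma (p + q + 1) := by
    rw [← Real.Gamma_add_one hpq]
    ring_nf
  rw [beta, hΓ, mul_div_assoc', mul_div_mul_left _ _ hpq]

theorem rpow_mul_rpow_mul_div_rpow {u h : ℝ} (hu : 0 < u) (hh : 0 < h) (a b r : ℝ) :
    u ^ a * h ^ b * (u / h) ^ r = u ^ (a + r) * h ^ (b - r) := by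
  rw [Real.div_rpow hu.le hh.le, Real.rpow_add hu, Real.rpow_sub hh]
  ring

theorem stmt_12_general (α x₁ x₂ : ℝ) (hα0 : 0 < α) (hα1 : α < 1) (h12 : x₁ ≤ x₂)
    (n : ℕ) (u h : ℝ → ℝ)
    (hu : ContinuousOn u (Set.Icc x₁ x₂)) (hh : ContinuousOn h (Set.Icc x₁ x₂))
    (hupos : ∀ x ∈ Set.Icc x₁ x₂, 0 < u x) (hhpos : ∀ x ∈ Set.Icc x₁ x₂, 0 < h x) :
    DifferentiableAt ℝ
      (fun s : ℝ => ∫ x in x₁..x₂, ∫ t in (-(u x / h x))..s,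
        u x ^ ((n : ℝ) - n * α) * h x ^ ((n : ℝ) * α) *
          (t + u x / h x) ^ ((n : ℝ) * α) * (s - t) ^ (-α)) 0 ∧
    (1 / Real.Gamma (1 - α)) *
        deriv (fun s : ℝ => ∫ x in x₁..x₂, ∫ t in (-(u x / h x))..s,
          u x ^ ((n : ℝ) - n * α) * h x ^ ((n : ℝ) * α) *
            (t + u x / h x) ^ ((n : ℝ) * α) * (s - t) ^ (-α)) 0
      = (Real.Gamma ((n : ℝ) * α + 1) / Real.Gamma (((n : ℝ) - 1) * α + 1)) *
          ∫ x in x₁..x₂, u x ^ ((n : ℝ) - α) * h x ^ α ∧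
    (1 / Real.Gamma (1 - α)) *
        deriv (fun s : ℝ => ∫ x in x₁..x₂, ∫ t in (-(u x / h x))..s,
          u x ^ ((n : ℝ) - n * α) * h x ^ ((n : ℝ) * α) *
            (t + u x / h x) ^ ((n : ℝ) * α) * (s - t) ^ (-α)) 0
      = (Real.Gamma ((n : ℝ) * α + 1) * Real.Gamma ((n : ℝ) + 1 - α) /
            (Real.Gamma (((n : ℝ) - 1) * α + 1) * Real.Gamma ((n : ℝ) + 1))) *
          ∫ x in x₁..x₂,
            (Real.Gamma ((n : ℝ) + 1) / Real.Gamma ((n : ℝ) + 1 - α)) *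
              u x ^ ((n : ℝ) - α) * h x ^ α := by
  set F := fun s : ℝ => ∫ x in x₁..x₂, ∫ t in (-(u x / h x))..s,
    u x ^ ((n : ℝ) - n * α) * h x ^ ((n : ℝ) * α) *
      (t + u x / h x) ^ ((n : ℝ) * α) * (s - t) ^ (-α)
  rw [← uIcc_of_le h12] at hu hh hupos hhpos
  have hnα : 0 ≤ (n : ℝ) * α := by positivity
  have hD : HasDerivAt F _ 0 := hasDerivAt_integral_integral_mul_rpow_add_mul_sub_rpow
    ((hu.rpow_const fun x hx => Or.inl (hupos x hx).ne').mul
      (hh.rpow_const fun x hx => Or.inl (hhpos x hx).ne'))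
    (hu.div hh fun x hx => (hhpos x hx).ne') (fun x hx => div_pos (hupos x hx) (hhpos x hx))
    (by linarith) (by linarith)
  have hval : 1 / Real.Gamma (1 - α) * deriv F 0 = Real.Gamma ((n : ℝ) * α + 1) /
      Real.Gamma (((n : ℝ) - 1) * α + 1) * ∫ x in x₁..x₂, u x ^ ((n : ℝ) - α) * h x ^ α := by
    have hγ : (n : ℝ) * α + -α + 1 = ((n : ℝ) - 1) * α + 1 := by ring
    have hΓ : Real.Gamma (1 - α) ≠ 0 := (Real.Gamma_pos_of_pos (by linarith)).ne'
    rw [hD.deriv, mul_beta_add_one_add_one (by linarith), hγ, neg_add_eq_sub]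
    have hpow : ∀ x ∈ uIcc x₁ x₂, u x ^ ((n : ℝ) - n * α) * h x ^ ((n : ℝ) * α) *
        (u x / h x) ^ ((n : ℝ) * α + -α) = u x ^ ((n : ℝ) - α) * h x ^ α := fun x hx => by
      rw [rpow_mul_rpow_mul_div_rpow (hupos x hx) (hhpos x hx)]
      ring_nf
    rw [integral_congr hpow]
    field_simp
  refine ⟨hD.differentiableAt, hval, ?_⟩
  have hΓn : Real.Gamma ((n : ℝ) + 1) ≠ 0 := (Real.Gamma_pos_of_pos (by positivity)).ne'
  have hΓnα : Real.Gamma ((n : ℝ) + 1 - α) ≠ 0 := (Real.Gamma_pos_of_pos (by linarith)).ne'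
  simp_rw [mul_assoc, integral_const_mul, ← mul_assoc, hval]
  congr 1
  field_simp

/-- (Proposition 1) The fractional Gateaux variation `δ^α F[u]` of the functional
`F[u] = ∫_{x₁}^{x₂} u(x)^n dx` equals
`(Γ(nα+1)/Γ((n-1)α+1)) ∫ u^(n-α) h^α dx
  = λ(α,n) ∫ (Γ(n+1)/Γ(n+1-α)) u^(n-α) h^α dx`
with `λ(α,n) = Γ(nα+1) Γ(n+1-α) / (Γ((n-1)α+1) Γ(n+1))`. -/
theorem stmt_12 (α x₁ x₂ : ℝ) (hα0 : 0 < α) (hα1 : α < 1) (h12 : x₁ ≤ x₂)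
    (n : ℕ) (hn : 1 ≤ n) (u h : ℝ → ℝ)
    (hu : ContinuousOn u (Set.Icc x₁ x₂)) (hh : ContinuousOn h (Set.Icc x₁ x₂))
    (hupos : ∀ x ∈ Set.Icc x₁ x₂, 0 < u x) (hhpos : ∀ x ∈ Set.Icc x₁ x₂, 0 < h x) :
    DifferentiableAt ℝ
      (fun s : ℝ => ∫ x in x₁..x₂, ∫ t in (-(u x / h x))..s,
        u x ^ ((n : ℝ) - n * α) * h x ^ ((n : ℝ) * α) *
          (t + u x / h x) ^ ((n : ℝ) * α) * (s - t) ^ (-α)) 0 ∧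
    (1 / Real.Gamma (1 - α)) *
        deriv (fun s : ℝ => ∫ x in x₁..x₂, ∫ t in (-(u x / h x))..s,
          u x ^ ((n : ℝ) - n * α) * h x ^ ((n : ℝ) * α) *
            (t + u x / h x) ^ ((n : ℝ) * α) * (s - t) ^ (-α)) 0
      = (Real.Gamma ((n : ℝ) * α + 1) / Real.Gamma (((n : ℝ) - 1) * α + 1)) *
          ∫ x in x₁..x₂, u x ^ ((n : ℝ) - α) * h x ^ α ∧
    (1 / Real.Gamma (1 - α)) *
        deriv (fun s : ℝ => ∫ x in x₁..x₂, ∫ t in (-(u x / h x))..s,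
          u x ^ ((n : ℝ) - n * α) * h x ^ ((n : ℝ) * α) *
            (t + u x / h x) ^ ((n : ℝ) * α) * (s - t) ^ (-α)) 0
      = (Real.Gamma ((n : ℝ) * α + 1) * Real.Gamma ((n : ℝ) + 1 - α) /
            (Real.Gamma (((n : ℝ) - 1) * α + 1) * Real.Gamma ((n : ℝ) + 1))) *
          ∫ x in x₁..x₂,
            (Real.Gamma ((n : ℝ) + 1) / Real.Gamma ((n : ℝ) + 1 - α)) *
              u x ^ ((n : ℝ) - α) * h x ^ α :=
  stmt_12_general α x₁ x₂ hα0 hα1 h12 n u h hu hh hupos hhpos
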